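/- arXiv:2509.13996 — 3 statements merged into one kernel-verified Lean document; each statement's English description precedes it below -/
import Mathlib

section
/- For every integer n ∈ ℤ, the function r_n : ℝ → ℂ defined by r_n(ξ) := ((ξ − i)/(ξ + i))^n has total variation V(r_n) = 2π|n| over ℝ. -/
/-!
Writing `θ = arctan ξ`, one has `(ξ - i)/(ξ + i) = exp ((2θ + π) i)`, so `r_n` is the
reparametrization by the increasing bijection `arctan : ℝ → (-π/2, π/2)` of the uniform
circular motion `θ ↦ exp ((2nθ + nπ) i)`, whose variation on an interval is its arc length
`2|n| · π`: `t ↦ exp (t i)` is `1`-Lipschitz, and the inscribed polygons with `N` equal chords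
have perimeters `N · |2 sin (x / 2N)| → |x|`.
-/

open Set Complex Filter Topology
open scoped Real

theorem Complex.dist_exp_ofReal_mul_I (x y : ℝ) :
    dist (exp (x * I)) (exp (y * I)) = |2 * Real.sin ((x - y) / 2)| := by
  have : exp (x * I) - exp (y * I) = exp (y * I) * (exp (I * ↑(x - y)) - 1) := by
    rw [mul_sub, ← exp_add]; push_cast; ring_nf
  rw [dist_eq, this, norm_mul, norm_exp_ofReal_mul_I, one_mul, norm_exp_I_mul_ofReal_sub_one,
    Real.norm_eq_abs]

theorem Complex.lipschitzWith_exp_ofReal_mul_I : LipschitzWith 1 fun t : ℝ => exp (t * I) :=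
  LipschitzWith.of_dist_le_mul fun x y => by
    have := Real.abs_sin_le_abs (x := (x - y) / 2)
    rw [abs_div, abs_two] at this
    rw [dist_exp_ofReal_mul_I, NNReal.coe_one, one_mul, Real.dist_eq, abs_mul, abs_two]
    linarith

theorem Real.sin_eq_mul_sinc (x : ℝ) : sin x = x * sinc x := by
  rcases eq_or_ne x 0 with rfl | hx
  · simp
  · rw [sinc_of_ne_zero hx, mul_div_cancel₀ _ hx]

theorem tendsto_nat_mul_abs_two_sin (y : ℝ) :
    Tendsto (fun N : ℕ => N * |2 * Real.sin (y / (N + 2) / 2)|) atTop (𝓝 |y|) := by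
  have hx : Tendsto (fun N : ℕ => y / (N + 2) / 2) atTop (𝓝 0) := by
    simpa using ((tendsto_const_nhds (x := y)).div_atTop
      (tendsto_atTop_add_const_right _ (2 : ℝ) tendsto_natCast_atTop_atTop)).div_const 2
  have hlim := ((tendsto_natCast_div_add_atTop (2 : ℝ)).const_mul |y|).mul
    ((Real.continuous_sinc.tendsto 0).comp hx).abs
  rw [Real.sinc_zero, abs_one, mul_one, mul_one] at hlim
  refine hlim.congr fun N => ?_
  simp only [Function.comp_apply, Real.sin_eq_mul_sinc (y / (N + 2) / 2), abs_mul, abs_div,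
    abs_two, abs_of_pos (by positivity : (0 : ℝ) < N + 2)]
  field_simp

theorem eVariationOn_exp_affine_mul_I_le (c d a b : ℝ) :
    eVariationOn (fun t : ℝ => exp (↑(c * t + d) * I)) (Ioo a b)
      ≤ ENNReal.ofReal (|c| * (b - a)) := by
  have hlip : LipschitzWith ‖c‖₊ fun t : ℝ => exp (↑(c * t + d) * I) := by
    have := lipschitzWith_exp_ofReal_mul_I.comp
      (LipschitzWith.of_dist_le_mul fun x y => by simp [Real.dist_eq, ← mul_sub, abs_mul] :
        LipschitzWith ‖c‖₊ fun t : ℝ => c * t + d)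
    rwa [one_mul] at this
  calc eVariationOn (fun t : ℝ => exp (↑(c * t + d) * I)) (Ioo a b)
      ≤ ‖c‖₊ * eVariationOn id (Ioo a b) :=
        (hlip.lipschitzOnWith (s := univ)).comp_eVariationOn_le (mapsTo_univ id _)
    _ ≤ ‖c‖₊ * eVariationOn id (univ ∩ Icc a b) := by
        gcongr
        exact eVariationOn.mono _ (by simpa using Ioo_subset_Icc_self)
    _ = ENNReal.ofReal (|c| * (b - a)) := by
        rw [(monotone_id.monotoneOn univ).eVariationOn_eq trivial trivial,
          ENNReal.ofReal_mul (abs_nonneg c), ← Real.enorm_eq_ofReal_abs, enorm_eq_nnnorm, id, id]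

theorem ofReal_nat_mul_abs_two_sin_le_eVariationOn_exp_affine_mul_I (c d : ℝ) {a b : ℝ}
    (hab : a < b) (N : ℕ) :
    ENNReal.ofReal (N * |2 * Real.sin (c * (b - a) / (N + 2) / 2)|)
      ≤ eVariationOn (fun t : ℝ => exp (↑(c * t + d) * I)) (Ioo a b) := by
  set h := (b - a) / (N + 2)
  have hh : 0 < h := by positivity
  have hgrid : ∀ i ∈ Icc 1 (N + 1), a + i * h ∈ Ioo a b := by
    rintro i ⟨hi1, hiN⟩
    have hi1' : (1 : ℝ) ≤ i := by exact_mod_cast hi1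
    have hiN' : (i : ℝ) ≤ N + 1 := by exact_mod_cast hiN
    have hNh : (N + 2) * h = b - a := by simp only [h]; field_simp
    constructor <;> nlinarith
  have hmono : MonotoneOn (fun i : ℕ => a + i * h) (Icc 1 (N + 1)) := fun i _ j _ hij => by
    have : (i : ℝ) ≤ j := by exact_mod_cast hij
    dsimp only
    nlinarith
  have hchord : ∀ i : ℕ,
      edist (exp (↑(c * (a + (↑(i + 1) : ℝ) * h) + d) * I))
          (exp (↑(c * (a + i * h) + d) * I))
        = ENNReal.ofReal |2 * Real.sin (c * (b - a) / (N + 2) / 2)| := by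
    intro i
    rw [edist_dist, dist_exp_ofReal_mul_I]
    congr 4
    simp only [h]; push_cast; ring
  refine le_trans (le_of_eq ?_) (eVariationOn.sum_le_of_monotoneOn_Icc hmono hgrid)
  simp only [hchord, Finset.sum_const, Nat.card_Ico, Nat.add_sub_cancel, nsmul_eq_mul]
  rw [ENNReal.ofReal_mul (Nat.cast_nonneg _), ENNReal.ofReal_natCast]

theorem ofReal_le_eVariationOn_exp_affine_mul_I (c d a b : ℝ) :
    ENNReal.ofReal (|c| * (b - a))
      ≤ eVariationOn (fun t : ℝ => exp (↑(c * t + d) * I)) (Ioo a b) := by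
  rcases le_or_gt b a with hba | hab
  · simp [ENNReal.ofReal_eq_zero.mpr
      (mul_nonpos_of_nonneg_of_nonpos (abs_nonneg c) (sub_nonpos.mpr hba))]
  · rw [← abs_of_pos (sub_pos.mpr hab), ← abs_mul]
    exact le_of_tendsto' (ENNReal.tendsto_ofReal (tendsto_nat_mul_abs_two_sin (c * (b - a))))
      (ofReal_nat_mul_abs_two_sin_le_eVariationOn_exp_affine_mul_I c d hab)

theorem eVariationOn_exp_affine_mul_I (c d a b : ℝ) :
    eVariationOn (fun t : ℝ => exp (↑(c * t + d) * I)) (Ioo a b)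
      = ENNReal.ofReal (|c| * (b - a)) :=
  le_antisymm (eVariationOn_exp_affine_mul_I_le c d a b)
    (ofReal_le_eVariationOn_exp_affine_mul_I c d a b)

theorem ofReal_sub_I_div_ofReal_add_I (ξ : ℝ) :
    ((ξ : ℂ) - I) / (ξ + I) = exp (↑(2 * Real.arctan ξ + π) * I) := by
  set θ := Real.arctan ξ
  set s : ℂ := ↑(Real.sin θ)
  set c : ℂ := ↑(Real.cos θ)
  have hne : (ξ : ℂ) + I ≠ 0 := fun h => by simpa using congrArg im h
  have hξ : (ξ : ℂ) = s / c := by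
    rw [← ofReal_div, ← Real.tan_eq_sin_div_cos, Real.tan_arctan]
  have hc : c ≠ 0 := ofReal_ne_zero.mpr (Real.cos_arctan_pos ξ).ne'
  have hsc : s ^ 2 + c ^ 2 = 1 := by simp only [s, c]; exact_mod_cast Real.sin_sq_add_cos_sq θ
  have hexp : exp (↑(2 * θ + π) * I) = -(c + s * I) ^ 2 := by
    rw [show (↑(2 * θ + π) * I : ℂ) = θ * I + θ * I + π * I by push_cast; ring,
      exp_add, exp_add, exp_pi_mul_I, exp_mul_I, ← ofReal_cos, ← ofReal_sin]
    ring
  rw [div_eq_iff hne, hexp, hξ]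
  field_simp
  linear_combination (s + c * s * (c + s * I)) * I_sq + ((c + s * I) * I) * hsc

/-- For every integer `n`, the function `r_n(ξ) = ((ξ − i)/(ξ + i))^n` has total
variation `V(r_n) = 2π|n|` over `ℝ`. -/
theorem eVariationOn_rn (n : ℤ) :
    eVariationOn (fun ξ : ℝ => (((ξ : ℂ) - Complex.I) / ((ξ : ℂ) + Complex.I)) ^ n)
      Set.univ = ENNReal.ofReal (2 * Real.pi * |(n : ℝ)|) := by
  have hr : (fun ξ : ℝ => (((ξ : ℂ) - I) / ((ξ : ℂ) + I)) ^ n)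
      = (fun t : ℝ => exp (↑(2 * n * t + n * π) * I)) ∘ Real.arctan := by
    funext ξ
    rw [Function.comp_apply, ofReal_sub_I_div_ofReal_add_I, ← exp_int_mul]
    push_cast; ring_nf
  rw [hr, eVariationOn.comp_eq_of_monotoneOn _ _ (Real.arctan_strictMono.monotone.monotoneOn _),
    image_univ, Real.range_arctan, eVariationOn_exp_affine_mul_I, abs_mul, abs_two]
  ring_nf
end

section
/- Let A be the unital ℂ-algebra (under pointwise operations) of all functions a : ℝ → ℂ that are continuous, have bounded variation on ℝ, and whose limits at +∞ and −∞ exist in ℂ and are equal. If φ : A → ℂ is a unital ℂ-algebra homomorphism that is bounded with respect to the norm ‖a‖ := sup_{x∈ℝ}|a(x)| + V(a) (i.e., there is C > 0 with |φ(a)| ≤ C‖a‖ for all a ∈ A), then either there exists x₀ ∈ ℝ such that φ(a) = a(x₀) for all a ∈ A, or φ(a) = lim_{x→+∞} a(x) for all a ∈ A. In other words, every character of the Banach algebra BV(ℝ) ∩ C(Ṙ) is an evaluation functional δ_x for some x in the one-point compactification Ṙ = ℝ ∪ {∞}. -/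
/-! For `a, b ∈ A` the function `|a - φ a|² + |b - φ b|²` lies in `A` and is killed by `φ`, so
it is not invertible in `A`. As `A` contains `1 / c` for every `c ∈ A` without zeros on `Ṙ`
(then `|c|` is bounded below, and `z ↦ 1 / z` is Lipschitz away from `0`), the function must
vanish at some point of `Ṙ`, where `a` and `b` take the values `φ a` and `φ b`. Choosing for `b`
the function `e^{2i arctan x}`, which separates the points of `Ṙ`, this point is the same for
every `a`. -/

open MeasureTheory Filter

noncomputable section

/-- Membership in the algebra `A = BV(ℝ) ∩ C(Ṙ)`: `a` is continuous, has bounded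
variation on `ℝ`, and has equal finite limits at `+∞` and `−∞`. -/
def MemBVCRdot (a : ℝ → ℂ) : Prop :=
  Continuous a ∧ BoundedVariationOn a Set.univ ∧
    ∃ L : ℂ, Tendsto a atTop (nhds L) ∧ Tendsto a atBot (nhds L)

/-- The norm `‖a‖ = sup_{x ∈ ℝ} |a(x)| + V(a)` of the Banach algebra `BV(ℝ) ∩ C(Ṙ)`. -/
def bvNorm (a : ℝ → ℂ) : ℝ :=
  (⨆ x : ℝ, ‖a x‖) + (eVariationOn a Set.univ).toReal

open Set Topology
open scoped NNReal ENNReal Real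

theorem eVariationOn_add_le {α E : Type*} [LinearOrder α] [SeminormedAddCommGroup E]
    (f g : α → E) (s : Set α) :
    eVariationOn (f + g) s ≤ eVariationOn f s + eVariationOn g s := by
  refine iSup_le fun ⟨n, u, hu, us⟩ => ?_
  calc ∑ i ∈ Finset.range n, edist ((f + g) (u (i + 1))) ((f + g) (u i))
      ≤ ∑ i ∈ Finset.range n,
          (edist (f (u (i + 1))) (f (u i)) + edist (g (u (i + 1))) (g (u i))) :=
        Finset.sum_le_sum fun i _ => edist_add_add_le _ _ _ _
    _ ≤ eVariationOn f s + eVariationOn g s := by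
        rw [Finset.sum_add_distrib]
        exact add_le_add (eVariationOn.sum_le hu us) (eVariationOn.sum_le hu us)

theorem BoundedVariationOn.add {α E : Type*} [LinearOrder α] [SeminormedAddCommGroup E]
    {f g : α → E} {s : Set α} (hf : BoundedVariationOn f s) (hg : BoundedVariationOn g s) :
    BoundedVariationOn (f + g) s :=
  ne_top_of_le_ne_top (ENNReal.add_ne_top.2 ⟨hf, hg⟩) (eVariationOn_add_le f g s)

theorem lipschitzOnWith_inv_setOf_le_norm {𝕜 : Type*} [NormedDivisionRing 𝕜] {m : ℝ≥0}
    (hm : 0 < m) :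
    LipschitzOnWith (m⁻¹ ^ 2) (·⁻¹ : 𝕜 → 𝕜) {z | (m : ℝ) ≤ ‖z‖} := by
  refine LipschitzOnWith.of_dist_le_mul fun z hz w hw => ?_
  have hz₀ : z ≠ 0 := norm_pos_iff.1 ((NNReal.coe_pos.2 hm).trans_le hz)
  have hw₀ : w ≠ 0 := norm_pos_iff.1 ((NNReal.coe_pos.2 hm).trans_le hw)
  have hinv : ∀ y : 𝕜, (m : ℝ) ≤ ‖y‖ → ‖y⁻¹‖ ≤ (m : ℝ)⁻¹ := fun y hy => by
    rw [norm_inv]; exact inv_anti₀ (NNReal.coe_pos.2 hm) hy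
  calc dist z⁻¹ w⁻¹ = ‖z⁻¹‖ * ‖w - z‖ * ‖w⁻¹‖ := by
        rw [dist_eq_norm, inv_sub_inv' hz₀ hw₀, norm_mul, norm_mul]
    _ ≤ (m : ℝ)⁻¹ * ‖w - z‖ * (m : ℝ)⁻¹ := by gcongr <;> exact hinv _ ‹_›
    _ = ↑(m⁻¹ ^ 2) * dist z w := by rw [dist_comm, dist_eq_norm]; push_cast; ring

theorem lipschitzWith_exp_ofReal_mul_I :
    LipschitzWith 1 (fun θ : ℝ => Complex.exp (θ * Complex.I)) := by
  have hderiv (θ : ℝ) : HasDerivAt (fun θ : ℝ => Complex.exp (θ * Complex.I))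
      (Complex.exp (θ * Complex.I) * (1 * Complex.I)) θ :=
    ((hasDerivAt_id θ).ofReal_comp.mul_const _).cexp
  refine lipschitzWith_of_nnnorm_deriv_le (fun θ => (hderiv θ).differentiableAt) fun θ => ?_
  rw [(hderiv θ).deriv, ← NNReal.coe_le_coe, coe_nnnorm]
  simp [Complex.norm_exp_ofReal_mul_I]

theorem Continuous.exists_pos_forall_le_of_tendsto_cocompact {X : Type*} [TopologicalSpace X]
    {f : X → ℝ} (hf : Continuous f) (hpos : ∀ x, 0 < f x) {R : ℝ} (hR : 0 < R)
    (hlim : Tendsto f (cocompact X) (𝓝 R)) : ∃ m, 0 < m ∧ ∀ x, m ≤ f x := by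
  rcases isEmpty_or_nonempty X with hX | ⟨⟨x₀⟩⟩
  · exact ⟨1, one_pos, fun x => isEmptyElim x⟩
  -- `min f (R / 2)` is eventually `R / 2`, so it attains its minimum
  have hlarge : ∀ᶠ x in cocompact X, R / 2 < f x := hlim.eventually (lt_mem_nhds (by linarith))
  obtain ⟨x, hx⟩ := (hf.min continuous_const).exists_forall_le' (f := fun x => min (f x) (R / 2))
    x₀ (hlarge.mono fun x hx => by simp [min_eq_right hx.le])
  exact ⟨min (f x) (R / 2), lt_min (hpos x) (by linarith), fun y => (hx y).trans (min_le_left _ _)⟩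

theorem memBVCRdot_iff {a : ℝ → ℂ} : MemBVCRdot a ↔
    Continuous a ∧ BoundedVariationOn a univ ∧ ∃ L, Tendsto a (cocompact ℝ) (𝓝 L) := by
  simp only [MemBVCRdot, cocompact_eq_atBot_atTop, tendsto_sup, and_comm (a := Tendsto a atTop _)]

namespace MemBVCRdot

variable {a b : ℝ → ℂ}

theorem exists_tendsto_cocompact (ha : MemBVCRdot a) : ∃ L, Tendsto a (cocompact ℝ) (𝓝 L) :=
  (memBVCRdot_iff.1 ha).2.2

theorem tendsto_cocompact (ha : MemBVCRdot a) {L : ℂ} (hL : Tendsto a atTop (𝓝 L)) :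
    Tendsto a (cocompact ℝ) (𝓝 L) := by
  obtain ⟨L', hL'⟩ := ha.exists_tendsto_cocompact
  rwa [tendsto_nhds_unique hL (hL'.mono_left (cocompact_eq_atBot_atTop (α := ℝ) ▸ le_sup_right))]

theorem const (c : ℂ) : MemBVCRdot fun _ => c :=
  memBVCRdot_iff.2 ⟨continuous_const, by simp [BoundedVariationOn, eVariationOn.constant_on],
    c, tendsto_const_nhds⟩

theorem add (ha : MemBVCRdot a) (hb : MemBVCRdot b) : MemBVCRdot (a + b) := by
  obtain ⟨hac, hav, L, hL⟩ := memBVCRdot_iff.1 ha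
  obtain ⟨hbc, hbv, L', hL'⟩ := memBVCRdot_iff.1 hb
  exact memBVCRdot_iff.2 ⟨hac.add hbc, hav.add hbv, L + L', hL.add hL'⟩

theorem mul (ha : MemBVCRdot a) (hb : MemBVCRdot b) : MemBVCRdot (a * b) := by
  obtain ⟨hac, hav, L, hL⟩ := memBVCRdot_iff.1 ha
  obtain ⟨hbc, hbv, L', hL'⟩ := memBVCRdot_iff.1 hb
  exact memBVCRdot_iff.2 ⟨hac.mul hbc, hav.smul hbv, L * L', hL.mul hL'⟩

theorem sub (ha : MemBVCRdot a) (hb : MemBVCRdot b) : MemBVCRdot (a - b) := by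
  convert ha.add ((const (-1)).mul hb) using 1
  ext x
  simp [sub_eq_add_neg]

protected theorem star (ha : MemBVCRdot a) : MemBVCRdot (star a) := by
  obtain ⟨hac, hav, L, hL⟩ := memBVCRdot_iff.1 ha
  exact memBVCRdot_iff.2 ⟨hac.star, Complex.isometry_conj.lipschitz.comp_boundedVariationOn hav,
    star L, (continuous_star.tendsto L).comp hL⟩

theorem ofReal_normSq (ha : MemBVCRdot a) : MemBVCRdot fun x => (Complex.normSq (a x) : ℂ) := by
  convert ha.mul ha.star using 1
  ext x
  simp [Complex.mul_conj]

theorem inv (ha : MemBVCRdot a) (ha₀ : ∀ x, a x ≠ 0) {L : ℂ}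
    (hL : Tendsto a (cocompact ℝ) (𝓝 L)) (hL₀ : L ≠ 0) : MemBVCRdot a⁻¹ := by
  obtain ⟨hac, hav, -⟩ := memBVCRdot_iff.1 ha
  obtain ⟨m, hm, ham⟩ := hac.norm.exists_pos_forall_le_of_tendsto_cocompact
    (fun x => norm_pos_iff.2 (ha₀ x)) (norm_pos_iff.2 hL₀) hL.norm
  refine memBVCRdot_iff.2 ⟨hac.inv₀ ha₀, ?_, L⁻¹, hL.inv₀ hL₀⟩
  exact (lipschitzOnWith_inv_setOf_le_norm (m := ⟨m, hm.le⟩) hm).comp_boundedVariationOn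
    (fun x _ => ham x) hav

end MemBVCRdot

/-- `e^{2i arctan x} = (1 + ix) / (1 - ix)`, the Cayley transform. -/
def cayley (x : ℝ) : ℂ := Complex.exp (↑(2 * Real.arctan x) * Complex.I)

theorem arg_cayley (x : ℝ) : (cayley x).arg = 2 * Real.arctan x := by
  rw [cayley, Complex.arg_exp_mul_I, toIocMod_eq_self]
  constructor <;> linarith [Real.neg_pi_div_two_lt_arctan x, Real.arctan_lt_pi_div_two x]

theorem cayley_injective : Function.Injective cayley := fun x y h => by
  have := congrArg Complex.arg h
  rw [arg_cayley, arg_cayley] at this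
  exact Real.arctan_injective (by linarith)

theorem cayley_ne_neg_one (x : ℝ) : cayley x ≠ -1 := fun h => by
  have := congrArg Complex.arg h
  rw [arg_cayley, Complex.arg_neg_one] at this
  linarith [Real.arctan_lt_pi_div_two x]

theorem tendsto_cayley_cocompact : Tendsto cayley (cocompact ℝ) (𝓝 (-1)) := by
  let e (θ : ℝ) : ℂ := Complex.exp (↑(2 * θ) * Complex.I)
  have he : Continuous e := by fun_prop
  have he_top : e (π / 2) = -1 := by
    simp only [e]; rw [← Complex.exp_pi_mul_I]; push_cast; ring_nf
  have he_bot : e (-(π / 2)) = -1 := by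
    simp only [e]; rw [← Complex.exp_neg_pi_mul_I]; push_cast; ring_nf
  rw [cocompact_eq_atBot_atTop, tendsto_sup]
  exact ⟨he_bot ▸ (he.tendsto _).comp (Real.tendsto_arctan_atBot.mono_right nhdsWithin_le_nhds),
    he_top ▸ (he.tendsto _).comp (Real.tendsto_arctan_atTop.mono_right nhdsWithin_le_nhds)⟩

theorem memBVCRdot_cayley : MemBVCRdot cayley := by
  have hbv : BoundedVariationOn (fun x => 2 * Real.arctan x) univ :=
    (Real.arctan_mono.const_mul zero_le_two).monotoneOn _ |>.boundedVariationOn (C := π)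
      fun x _ => abs_le.2 ⟨by linarith [Real.neg_pi_div_two_lt_arctan x],
        by linarith [Real.arctan_lt_pi_div_two x]⟩
  exact memBVCRdot_iff.2 ⟨by unfold cayley; fun_prop,
    lipschitzWith_exp_ofReal_mul_I.comp_boundedVariationOn hbv, -1, tendsto_cayley_cocompact⟩

theorem Complex.normSq_add_normSq_eq_zero {z w : ℂ} :
    Complex.normSq z + Complex.normSq w = 0 ↔ z = 0 ∧ w = 0 := by
  rw [add_eq_zero_iff_of_nonneg (Complex.normSq_nonneg z) (Complex.normSq_nonneg w),
    Complex.normSq_eq_zero, Complex.normSq_eq_zero]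

/-- A unital `ℂ`-algebra homomorphism `A → ℂ`, encoded as a map on all of `ℝ → ℂ` that is
constrained only on `A`. -/
structure IsBVCRdotCharacter (φ : (ℝ → ℂ) → ℂ) : Prop where
  map_one : φ (fun _ => (1 : ℂ)) = 1
  map_add : ∀ a b : ℝ → ℂ, MemBVCRdot a → MemBVCRdot b → φ (a + b) = φ a + φ b
  map_mul : ∀ a b : ℝ → ℂ, MemBVCRdot a → MemBVCRdot b → φ (a * b) = φ a * φ b
  map_smul : ∀ (c : ℂ) (a : ℝ → ℂ), MemBVCRdot a → φ (c • a) = c * φ a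

namespace IsBVCRdotCharacter

variable {φ : (ℝ → ℂ) → ℂ} {a b : ℝ → ℂ}

theorem map_const (hφ : IsBVCRdotCharacter φ) (c : ℂ) : φ (fun _ => c) = c := by
  have hc : (fun _ : ℝ => c) = c • fun _ => (1 : ℂ) := by ext; simp
  rw [hc, hφ.map_smul c _ (MemBVCRdot.const 1), hφ.map_one, mul_one]

theorem map_sub (hφ : IsBVCRdotCharacter φ) (ha : MemBVCRdot a) (hb : MemBVCRdot b) :
    φ (a - b) = φ a - φ b := by
  rw [eq_sub_iff_add_eq, ← hφ.map_add _ _ (ha.sub hb) hb, sub_add_cancel]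

theorem map_ne_zero (hφ : IsBVCRdotCharacter φ) (hb : MemBVCRdot b) (hb₀ : ∀ x, b x ≠ 0)
    {L : ℂ} (hL : Tendsto b (cocompact ℝ) (𝓝 L)) (hL₀ : L ≠ 0) : φ b ≠ 0 := by
  have hunit : b * b⁻¹ = fun _ => 1 := funext fun x => mul_inv_cancel₀ (hb₀ x)
  have h := hφ.map_mul _ _ hb (hb.inv hb₀ hL hL₀)
  rw [hunit, hφ.map_one] at h
  exact left_ne_zero_of_mul_eq_one h.symm

theorem map_ofReal_normSq_eq_zero (hφ : IsBVCRdotCharacter φ) (ha : MemBVCRdot a)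
    (ha₀ : φ a = 0) : φ (fun x => (Complex.normSq (a x) : ℂ)) = 0 := by
  have hsq : (fun x => (Complex.normSq (a x) : ℂ)) = a * star a := by
    ext x; simp [Complex.mul_conj]
  rw [hsq, hφ.map_mul _ _ ha ha.star, ha₀, zero_mul]

theorem exists_eq_or_tendsto_eq (hφ : IsBVCRdotCharacter φ) (ha : MemBVCRdot a)
    (hb : MemBVCRdot b) {L L' : ℂ} (hL : Tendsto a (cocompact ℝ) (𝓝 L))
    (hL' : Tendsto b (cocompact ℝ) (𝓝 L')) :
    (∃ x, a x = φ a ∧ b x = φ b) ∨ (L = φ a ∧ L' = φ b) := by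
  by_contra! h
  have hnormSq {f : ℝ → ℂ} (hf : MemBVCRdot f) :
      MemBVCRdot (fun x => (Complex.normSq (f x - φ f) : ℂ)) ∧
        φ (fun x => (Complex.normSq (f x - φ f) : ℂ)) = 0 := by
    have hf' := hf.sub (.const (φ f))
    refine ⟨hf'.ofReal_normSq, hφ.map_ofReal_normSq_eq_zero (a := f - fun _ => φ f) hf' ?_⟩
    rw [hφ.map_sub hf (.const _), hφ.map_const, sub_self]
  have hlim {f : ℝ → ℂ} {ℓ c : ℂ} (hf : Tendsto f (cocompact ℝ) (𝓝 ℓ)) :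
      Tendsto (fun x => (Complex.normSq (f x - c) : ℂ)) (cocompact ℝ)
        (𝓝 (Complex.normSq (ℓ - c))) :=
    ((Complex.continuous_ofReal.comp Complex.continuous_normSq).tendsto _).comp (hf.sub_const c)
  refine hφ.map_ne_zero ((hnormSq ha).1.add (hnormSq hb).1) (fun x => ?_)
    ((hlim hL).add (hlim hL')) ?_ ?_
  · rw [Pi.add_apply, ← Complex.ofReal_add, Complex.ofReal_ne_zero, Ne,
      Complex.normSq_add_normSq_eq_zero, sub_eq_zero, sub_eq_zero, not_and]
    exact h.1 x
  · rw [← Complex.ofReal_add, Complex.ofReal_ne_zero, Ne, Complex.normSq_add_normSq_eq_zero,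
      sub_eq_zero, sub_eq_zero, not_and]
    exact h.2
  · rw [hφ.map_add _ _ (hnormSq ha).1 (hnormSq hb).1, (hnormSq ha).2, (hnormSq hb).2, add_zero]

end IsBVCRdotCharacter

theorem character_of_BV_inter_CRdot_is_evaluation_general
    (φ : (ℝ → ℂ) → ℂ)
    (hone : φ (fun _ => (1 : ℂ)) = 1)
    (hadd : ∀ a b : ℝ → ℂ, MemBVCRdot a → MemBVCRdot b → φ (a + b) = φ a + φ b)
    (hmul : ∀ a b : ℝ → ℂ, MemBVCRdot a → MemBVCRdot b → φ (a * b) = φ a * φ b)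
    (hsmul : ∀ (c : ℂ) (a : ℝ → ℂ), MemBVCRdot a → φ (c • a) = c * φ a) :
    (∃ x₀ : ℝ, ∀ a : ℝ → ℂ, MemBVCRdot a → φ a = a x₀) ∨
    (∀ (a : ℝ → ℂ) (L : ℂ), MemBVCRdot a → Tendsto a atTop (nhds L) → φ a = L) := by
  have hφ : IsBVCRdotCharacter φ := ⟨hone, hadd, hmul, hsmul⟩
  have hsep {a : ℝ → ℂ} (ha : MemBVCRdot a) {L : ℂ} (hL : Tendsto a (cocompact ℝ) (𝓝 L)) :=
    hφ.exists_eq_or_tendsto_eq ha memBVCRdot_cayley hL tendsto_cayley_cocompact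
  rcases hsep memBVCRdot_cayley tendsto_cayley_cocompact with ⟨x₀, -, hx₀⟩ | ⟨-, hφc⟩
  · refine Or.inl ⟨x₀, fun a ha => ?_⟩
    obtain ⟨L, hL⟩ := ha.exists_tendsto_cocompact
    rcases hsep ha hL with ⟨x, hax, hx⟩ | ⟨-, hφc⟩
    · rw [← hax, cayley_injective (hx.trans hx₀.symm)]
    · exact absurd (hx₀.trans hφc.symm) (cayley_ne_neg_one x₀)
  · refine Or.inr fun a L ha hL => ?_
    rcases hsep ha (ha.tendsto_cocompact hL) with ⟨x, -, hx⟩ | ⟨hLa, -⟩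
    · exact absurd (hx.trans hφc.symm) (cayley_ne_neg_one x)
    · exact hLa.symm

/-- Every bounded unital `ℂ`-algebra homomorphism (character) `φ` of the Banach algebra
`A = BV(ℝ) ∩ C(Ṙ)` (with norm `‖a‖ = sup|a| + V(a)`) is an evaluation functional: either
there is `x₀ ∈ ℝ` with `φ(a) = a(x₀)` for all `a ∈ A`, or `φ(a) = lim_{x→+∞} a(x)`
for all `a ∈ A`, i.e. `φ = δ_x` for some `x` in `Ṙ = ℝ ∪ {∞}`. -/
theorem character_of_BV_inter_CRdot_is_evaluation
    (φ : (ℝ → ℂ) → ℂ)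
    (hone : φ (fun _ => (1 : ℂ)) = 1)
    (hadd : ∀ a b : ℝ → ℂ, MemBVCRdot a → MemBVCRdot b → φ (a + b) = φ a + φ b)
    (hmul : ∀ a b : ℝ → ℂ, MemBVCRdot a → MemBVCRdot b → φ (a * b) = φ a * φ b)
    (hsmul : ∀ (c : ℂ) (a : ℝ → ℂ), MemBVCRdot a → φ (c • a) = c * φ a)
    (hbdd : ∃ C : ℝ, 0 < C ∧ ∀ a : ℝ → ℂ, MemBVCRdot a → ‖φ a‖ ≤ C * bvNorm a) :
    (∃ x₀ : ℝ, ∀ a : ℝ → ℂ, MemBVCRdot a → φ a = a x₀) ∨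
    (∀ (a : ℝ → ℂ) (L : ℂ), MemBVCRdot a → Tendsto a atTop (nhds L) → φ a = L) :=
  character_of_BV_inter_CRdot_is_evaluation_general φ hone hadd hmul hsmul
end
end

section
/- Let κ ∈ ℤ and let b : ℝ → ℂ satisfy 0 < m ≤ |b(ξ)| ≤ M for all ξ ∈ ℝ (for some constants m, M). For t ∈ [0, 1] define h_t : ℝ → ℂ by h_t(ξ) := (r_{−κ}(ξ)·b(ξ))^t · r_κ(ξ), where z^t denotes the principal power. Then the map t ↦ h_t is continuous from [0, 1] into the bounded functions on ℝ with the supremum norm; that is, for every t₀ ∈ [0, 1], sup_{ξ∈ℝ} |h_t(ξ) − h_{t₀}(ξ)| → 0 as t → t₀ within [0, 1]. -/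
/-! Since `|r_n| = 1` on `ℝ`, `|h_t(ξ) − h_{t₀}(ξ)| = |exp(t w(ξ)) − exp(t₀ w(ξ))|` with
`w = Log(r_{−κ} b)`. The bounds `m ≤ |r_{−κ} b| ≤ M` make `w` uniformly bounded, say `|w| ≤ C`
(its imaginary part is an argument), and then
`|e^{tw} − e^{t₀w}| = |e^{t₀w}| |e^{(t−t₀)w} − 1| ≤ e^{|t₀|C} |t − t₀| C e^{|t−t₀|C}`
uniformly in `ξ`. -/

open Filter

noncomputable section

/-- The rational symbol `r_m(ξ) = ((ξ − i)/(ξ + i))^m` for `m : ℤ`. -/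
def rsym (m : ℤ) (ξ : ℝ) : ℂ := (((ξ : ℂ) - Complex.I) / ((ξ : ℂ) + Complex.I)) ^ m

open Topology

lemma norm_rsym (n : ℤ) (ξ : ℝ) : ‖rsym n ξ‖ = 1 := by
  have hconj : (starRingEnd ℂ) ((ξ : ℂ) - Complex.I) = (ξ : ℂ) + Complex.I := by
    simp [Complex.conj_I]
  have hne : (ξ : ℂ) + Complex.I ≠ 0 := fun h0 => by simpa using congrArg Complex.im h0
  rw [rsym, norm_zpow, norm_div, ← Complex.norm_conj ((ξ : ℂ) - Complex.I), hconj,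
    div_self (norm_ne_zero_iff.mpr hne), one_zpow]

lemma Complex.norm_log_le_of_norm_mem_Icc {z : ℂ} {m M : ℝ} (hm : 0 < m)
    (hz : ‖z‖ ∈ Set.Icc m M) : ‖log z‖ ≤ max |Real.log m| |Real.log M| + Real.pi := by
  have hre : |(log z).re| ≤ max |Real.log m| |Real.log M| := by
    rw [log_re]
    exact abs_le_max_abs_abs (Real.log_le_log hm hz.1) (Real.log_le_log (hm.trans_le hz.1) hz.2)
  have him : |(log z).im| ≤ Real.pi := by
    rw [log_im]
    exact abs_arg_le_pi z
  linarith [norm_le_abs_re_add_abs_im (log z)]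

lemma Complex.norm_exp_sub_one_le_norm_mul_exp (z : ℂ) : ‖exp z - 1‖ ≤ ‖z‖ * Real.exp ‖z‖ := by
  simpa using norm_exp_sub_sum_le_norm_mul_exp z 1

lemma Complex.norm_exp_ofReal_mul_sub_le (w : ℂ) (t s : ℝ) :
    ‖exp (t * w) - exp (s * w)‖
      ≤ Real.exp (|s| * ‖w‖) * (|t - s| * ‖w‖ * Real.exp (|t - s| * ‖w‖)) := by
  have hnorm : ∀ r : ℝ, ‖(r : ℂ) * w‖ = |r| * ‖w‖ := fun r => by
    rw [norm_mul, norm_real, Real.norm_eq_abs]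
  calc ‖exp (t * w) - exp (s * w)‖ = ‖exp (s * w)‖ * ‖exp ((t - s : ℝ) * w) - 1‖ := by
        rw [← norm_mul, mul_sub, ← exp_add, mul_one]
        push_cast
        ring_nf
    _ ≤ Real.exp (|s| * ‖w‖) * (|t - s| * ‖w‖ * Real.exp (|t - s| * ‖w‖)) := by
        gcongr
        · exact (norm_exp_le_exp_norm _).trans_eq (by rw [hnorm])
        · exact (norm_exp_sub_one_le_norm_mul_exp _).trans_eq (by rw [hnorm])

lemma tendsto_iSup_norm_of_norm_le {α ι E : Type*} [Nonempty ι] [SeminormedAddCommGroup E]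
    {l : Filter α} {F : α → ι → E} {g : α → ℝ} (hF : ∀ a i, ‖F a i‖ ≤ g a)
    (hg : Tendsto g l (𝓝 0)) : Tendsto (fun a => ⨆ i, ‖F a i‖) l (𝓝 0) :=
  squeeze_zero (fun _ => Real.iSup_nonneg fun _ => norm_nonneg _) (fun a => ciSup_le (hF a)) hg

lemma Complex.tendsto_iSup_norm_exp_ofReal_mul_sub {ι : Type*} [Nonempty ι] {w : ι → ℂ} {C : ℝ}
    (hw : ∀ i, ‖w i‖ ≤ C) (t₀ : ℝ) :
    Tendsto (fun t : ℝ => ⨆ i, ‖exp (t * w i) - exp (t₀ * w i)‖) (𝓝 t₀) (𝓝 0) := by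
  have hg : Continuous fun t : ℝ =>
      Real.exp (|t₀| * C) * (|t - t₀| * C * Real.exp (|t - t₀| * C)) := by
    fun_prop
  refine tendsto_iSup_norm_of_norm_le (fun t i => ?_) (by simpa using hg.tendsto t₀)
  refine (norm_exp_ofReal_mul_sub_le (w i) t t₀).trans ?_
  have hC : 0 ≤ C := (norm_nonneg _).trans (hw i)
  gcongr <;> exact hw i

theorem homotopy_sup_norm_continuous_general
    (κ : ℤ) (b : ℝ → ℂ) (m M : ℝ) (hm : 0 < m)
    (hb : ∀ ξ : ℝ, m ≤ ‖b ξ‖ ∧ ‖b ξ‖ ≤ M)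
    (h : ℝ → ℝ → ℂ)
    (hh : ∀ (t : ℝ) (ξ : ℝ),
      h t ξ = Complex.exp ((t : ℂ) * Complex.log (rsym (-κ) ξ * b ξ)) * rsym κ ξ)
    (t₀ : ℝ) :
    Tendsto (fun t : ℝ => ⨆ ξ : ℝ, ‖h t ξ - h t₀ ξ‖)
      (nhdsWithin t₀ (Set.Icc (0 : ℝ) 1)) (nhds 0) := by
  have hlog (ξ : ℝ) : ‖Complex.log (rsym (-κ) ξ * b ξ)‖
      ≤ max |Real.log m| |Real.log M| + Real.pi :=
    Complex.norm_log_le_of_norm_mem_Icc hm (by rw [norm_mul, norm_rsym, one_mul]; exact hb ξ)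
  have hsup : (fun t : ℝ => ⨆ ξ : ℝ, ‖h t ξ - h t₀ ξ‖) = fun t : ℝ =>
      ⨆ ξ : ℝ, ‖Complex.exp (t * Complex.log (rsym (-κ) ξ * b ξ))
        - Complex.exp (t₀ * Complex.log (rsym (-κ) ξ * b ξ))‖ := by
    simp only [hh, ← sub_mul, norm_mul, norm_rsym, mul_one]
  rw [hsup]
  exact (Complex.tendsto_iSup_norm_exp_ofReal_mul_sub hlog t₀).mono_left nhdsWithin_le_nhds

/-- Let `κ ∈ ℤ` and let `b : ℝ → ℂ` satisfy `0 < m ≤ |b(ξ)| ≤ M` for all `ξ`. For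
`t ∈ [0, 1]` let `h_t(ξ) = (r_{−κ}(ξ)·b(ξ))^t · r_κ(ξ)`, where `z^t = exp(t·Log z)`
is the principal power. Then `t ↦ h_t` is continuous into the bounded functions with
the supremum norm: for every `t₀ ∈ [0, 1]`,
`sup_{ξ∈ℝ} |h_t(ξ) − h_{t₀}(ξ)| → 0` as `t → t₀` within `[0, 1]`. -/
theorem homotopy_sup_norm_continuous
    (κ : ℤ) (b : ℝ → ℂ) (m M : ℝ) (hm : 0 < m)
    (hb : ∀ ξ : ℝ, m ≤ ‖b ξ‖ ∧ ‖b ξ‖ ≤ M)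
    (h : ℝ → ℝ → ℂ)
    (hh : ∀ (t : ℝ) (ξ : ℝ),
      h t ξ = Complex.exp ((t : ℂ) * Complex.log (rsym (-κ) ξ * b ξ)) * rsym κ ξ)
    (t₀ : ℝ) (ht₀ : t₀ ∈ Set.Icc (0 : ℝ) 1) :
    Tendsto (fun t : ℝ => ⨆ ξ : ℝ, ‖h t ξ - h t₀ ξ‖)
      (nhdsWithin t₀ (Set.Icc (0 : ℝ) 1)) (nhds 0) :=
  homotopy_sup_norm_continuous_general κ b m M hm hb h hh t₀
end
end
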